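/- Let f : ℝ^n → ℝ have L-Lipschitz gradient in direction t, let H be symmetric with eigenvalues in [λ, Λ], 0 < λ ≤ L, and let t satisfy ⟨Ht, t⟩ = -⟨∇f(x), t⟩. Then for α* = λ/L, f(x + α* t) ≤ f(x) - (λ/(2L))·⟨Ht, t⟩. -/

import Mathlib

/-!
Along the line `s ↦ x + s • t` the directional Lipschitz bound makes
`s ↦ f (x + s • t) - s ⟪∇f x, t⟫ - L ‖t‖² s² / 2` nonincreasing, which gives the descent
inequality `f (x + α t) ≤ f x + α ⟪∇f x, t⟫ + L α² ‖t‖² / 2` for `α ∈ [0, 1]`. With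
`⟪∇f x, t⟫ = -⟪H t, t⟫` and `λ ‖t‖² ≤ ⟪H t, t⟫`, the step `α = λ / L` makes the quadratic
term at most half of the linear decrease.
-/

open scoped RealInnerProductSpace
open Set

theorem le_add_mul_add_sq_of_hasDerivAt_sub_le {g g' : ℝ → ℝ} {α K : ℝ} (hα : 0 ≤ α)
    (hg : ∀ s ∈ Icc 0 α, HasDerivAt g (g' s) s) (hg' : ∀ s ∈ Ioo 0 α, g' s - g' 0 ≤ K * s) :
    g α ≤ g 0 + α * g' 0 + K * α ^ 2 / 2 := by
  let φ : ℝ → ℝ := fun s ↦ g s - s * g' 0 - K * s ^ 2 / 2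
  have hφ : ∀ s ∈ Icc 0 α, HasDerivAt φ (g' s - g' 0 - K * s) s := fun s hs ↦ by
    refine (((hg s hs).sub ((hasDerivAt_id' s).mul_const (g' 0))).sub
      (((hasDerivAt_pow 2 s).const_mul K).div_const 2)).congr_deriv ?_
    norm_num
    ring
  have hanti : AntitoneOn φ (Icc 0 α) := by
    refine antitoneOn_of_hasDerivWithinAt_nonpos (f' := fun s ↦ g' s - g' 0 - K * s)
      (convex_Icc 0 α) (fun s hs ↦ (hφ s hs).continuousAt.continuousWithinAt)
      (fun s hs ↦ ?_) (fun s hs ↦ ?_)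
    all_goals rw [interior_Icc] at hs
    · exact (hφ s (Ioo_subset_Icc_self hs)).hasDerivWithinAt
    · linarith [hg' s hs]
  have := hanti (left_mem_Icc.2 hα) (right_mem_Icc.2 hα) hα
  simp only [φ] at this
  linarith

theorem hasDerivAt_comp_add_smul {E : Type*} [NormedAddCommGroup E] [InnerProductSpace ℝ E]
    [CompleteSpace E] {f : E → ℝ} {x t : E} {s : ℝ} (hf : DifferentiableAt ℝ f (x + s • t)) :
    HasDerivAt (fun s : ℝ ↦ f (x + s • t)) ⟪gradient f (x + s • t), t⟫ s := by
  have hline : HasDerivAt (fun s : ℝ ↦ x + s • t) t s := by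
    simpa using ((hasDerivAt_id s).smul_const t).const_add x
  exact (hf.hasGradientAt.hasFDerivAt.comp_hasDerivAt s hline).congr_deriv
    (InnerProductSpace.toDual_apply_apply ..)

theorem le_add_inner_gradient_add_sq_of_gradient_lipschitz_along {E : Type*}
    [NormedAddCommGroup E] [InnerProductSpace ℝ E] [CompleteSpace E] {f : E → ℝ}
    (hf : Differentiable ℝ f) {x t : E} {L α : ℝ} (hα0 : 0 ≤ α) (hα1 : α ≤ 1)
    (hLip : ∀ s ∈ Icc (0 : ℝ) 1, ‖gradient f (x + s • t) - gradient f x‖ ≤ L * s * ‖t‖) :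
    f (x + α • t) ≤ f x + α * ⟪gradient f x, t⟫ + L * ‖t‖ ^ 2 * α ^ 2 / 2 := by
  have := le_add_mul_add_sq_of_hasDerivAt_sub_le (g := fun s : ℝ ↦ f (x + s • t))
    (K := L * ‖t‖ ^ 2) hα0 (fun s _ ↦ hasDerivAt_comp_add_smul (hf _)) fun s hs ↦ by
      have hs01 : s ∈ Icc (0 : ℝ) 1 := ⟨hs.1.le, hs.2.le.trans hα1⟩
      calc ⟪gradient f (x + s • t), t⟫ - ⟪gradient f (x + (0 : ℝ) • t), t⟫
          = ⟪gradient f (x + s • t) - gradient f x, t⟫ := by simp [inner_sub_left]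
        _ ≤ ‖gradient f (x + s • t) - gradient f x‖ * ‖t‖ := real_inner_le_norm _ _
        _ ≤ L * s * ‖t‖ * ‖t‖ := by gcongr; exact hLip s hs01
        _ = L * ‖t‖ ^ 2 * s := by ring
  simpa using this

theorem stmt_12_general {n : ℕ} (f : EuclideanSpace ℝ (Fin n) → ℝ)
    (hf : Differentiable ℝ f)
    (x t : EuclideanSpace ℝ (Fin n)) (L lam : ℝ)
    (hlam : 0 < lam) (hlamL : lam ≤ L)
    (hLip : ∀ s ∈ Set.Icc (0 : ℝ) 1,
      ‖gradient f (x + s • t) - gradient f x‖ ≤ L * s * ‖t‖)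
    (H : EuclideanSpace ℝ (Fin n) →ₗ[ℝ] EuclideanSpace ℝ (Fin n))
    (hlb : ∀ v, lam * ‖v‖ ^ 2 ≤ ⟪H v, v⟫)
    (hCG : ⟪H t, t⟫ = -⟪gradient f x, t⟫) :
    f (x + (lam / L) • t) ≤ f x - lam / (2 * L) * ⟪H t, t⟫ := by
  have hL : 0 < L := hlam.trans_le hlamL
  have hα : 0 ≤ lam / L := div_nonneg hlam.le hL.le
  calc f (x + (lam / L) • t)
      ≤ f x + lam / L * ⟪gradient f x, t⟫ + L * ‖t‖ ^ 2 * (lam / L) ^ 2 / 2 :=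
        le_add_inner_gradient_add_sq_of_gradient_lipschitz_along hf hα
          ((div_le_one hL).2 hlamL) hLip
    _ = f x - lam / L * ⟪H t, t⟫ + lam / L / 2 * (lam * ‖t‖ ^ 2) := by
        rw [hCG]; field_simp; ring
    _ ≤ f x - lam / L * ⟪H t, t⟫ + lam / L / 2 * ⟪H t, t⟫ := by gcongr; exact hlb t
    _ = f x - lam / (2 * L) * ⟪H t, t⟫ := by ring

/-- Smooth decrease with exact step `α* = λ/L`: if `f` has `L`-Lipschitz gradient in
direction `t`, `H` is symmetric with eigenvalues in `[λ, Λ]`, `0 < λ ≤ L`, and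
`⟨Ht, t⟩ = -⟨∇f(x), t⟩`, then `f(x + (λ/L)t) ≤ f(x) - (λ/(2L))⟨Ht, t⟩`. -/
theorem stmt_12 {n : ℕ} (f : EuclideanSpace ℝ (Fin n) → ℝ)
    (hf : Differentiable ℝ f)
    (x t : EuclideanSpace ℝ (Fin n)) (L lam Λ : ℝ)
    (hlam : 0 < lam) (hlamL : lam ≤ L) (hlamΛ : lam ≤ Λ)
    (hLip : ∀ s ∈ Set.Icc (0 : ℝ) 1,
      ‖gradient f (x + s • t) - gradient f x‖ ≤ L * s * ‖t‖)
    (H : EuclideanSpace ℝ (Fin n) →ₗ[ℝ] EuclideanSpace ℝ (Fin n))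
    (hsymm : ∀ u v, ⟪H u, v⟫ = ⟪u, H v⟫)
    (hlb : ∀ v, lam * ‖v‖ ^ 2 ≤ ⟪H v, v⟫)
    (hub : ∀ v, ‖H v‖ ≤ Λ * ‖v‖)
    (hCG : ⟪H t, t⟫ = -⟪gradient f x, t⟫) :
    f (x + (lam / L) • t) ≤ f x - lam / (2 * L) * ⟪H t, t⟫ :=
  stmt_12_general f hf x t L lam hlam hlamL hLip H hlb hCG
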